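/- Let n ≥ 2 and A ∈ ℝ^{n×n} be a symmetric matrix with eigenvalues λ₁ < λ₂ ≤ … ≤ λₙ such that −A is a positive matrix (all entries of A are negative) and 0 < λ₂. Then the quadratic function q_A(x) = ⟨Ax, x⟩ is spherically quasi-convex on C = 𝕊^{n-1} ∩ ℝⁿ₊₊. -/

import Mathlib

open scoped InnerProductSpace

/-- The (constant-speed) parametrization on `[0,1]` of the minimal geodesic segment of the
unit sphere joining `x` to a non-antipodal point `y`, namely
`t ↦ (cos(t·d(x,y)) - ⟪x,y⟫ sin(t·d(x,y))/√(1-⟪x,y⟫²)) • x + (sin(t·d(x,y))/√(1-⟪x,y⟫²)) • y`,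
where `d(x,y) = arccos ⟪x,y⟫` is the intrinsic distance on the sphere. -/
noncomputable def geoSeg {n : ℕ} (x y : EuclideanSpace ℝ (Fin n)) (t : ℝ) :
    EuclideanSpace ℝ (Fin n) :=
  (Real.cos (t * Real.arccos ⟪x, y⟫_ℝ) -
      ⟪x, y⟫_ℝ * Real.sin (t * Real.arccos ⟪x, y⟫_ℝ) / Real.sqrt (1 - ⟪x, y⟫_ℝ ^ 2)) • x +
    (Real.sin (t * Real.arccos ⟪x, y⟫_ℝ) / Real.sqrt (1 - ⟪x, y⟫_ℝ ^ 2)) • y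

/-- `γ`, parametrized (with constant speed) on `[0,1]`, is a minimal geodesic segment of the
unit sphere joining `x` to `y`.  For `y ≠ -x` it is the unique such segment `geoSeg x y`
(which is constantly `x` when `y = x`); for `y = -x` it is
`t ↦ cos(tπ) • x + sin(tπ) • v` for some unit vector `v` orthogonal to `x`. -/
def IsMinGeodesic {n : ℕ} (γ : ℝ → EuclideanSpace ℝ (Fin n))
    (x y : EuclideanSpace ℝ (Fin n)) : Prop :=
  ‖x‖ = 1 ∧ ‖y‖ = 1 ∧
    ((y ≠ -x ∧ γ = geoSeg x y) ∨
      (y = -x ∧ ∃ v : EuclideanSpace ℝ (Fin n), ‖v‖ = 1 ∧ ⟪x, v⟫_ℝ = 0 ∧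
        γ = fun t => Real.cos (t * Real.pi) • x + Real.sin (t * Real.pi) • v))

/-- A subset of the unit sphere is spherically convex if it contains every minimal geodesic
segment joining any two of its points. -/
def SphericallyConvex {n : ℕ} (C : Set (EuclideanSpace ℝ (Fin n))) : Prop :=
  ∀ x ∈ C, ∀ y ∈ C, ∀ γ : ℝ → EuclideanSpace ℝ (Fin n),
    IsMinGeodesic γ x y → ∀ t ∈ Set.Icc (0 : ℝ) 1, γ t ∈ C

/-- `f` is spherically quasi-convex on `C`: along every minimal geodesic segment lying in `C`,
the composition with `f` is quasi-convex, i.e. `f(γ t) ≤ max (f(γ t₁)) (f(γ t₂))` for all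
`t ∈ [t₁, t₂]`. -/
def SphQuasiConvexOn {n : ℕ} (C : Set (EuclideanSpace ℝ (Fin n)))
    (f : EuclideanSpace ℝ (Fin n) → ℝ) : Prop :=
  ∀ x ∈ C, ∀ y ∈ C, ∀ γ : ℝ → EuclideanSpace ℝ (Fin n),
    IsMinGeodesic γ x y → (∀ t ∈ Set.Icc (0 : ℝ) 1, γ t ∈ C) →
    ∀ t₁ t t₂ : ℝ, 0 ≤ t₁ → t₁ ≤ t → t ≤ t₂ → t₂ ≤ 1 →
      f (γ t) ≤ max (f (γ t₁)) (f (γ t₂))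

/-- Multiplication of an `n × n` real matrix with a vector of `EuclideanSpace ℝ (Fin n)`. -/
noncomputable def mulVecE {n : ℕ} (A : Matrix (Fin n) (Fin n) ℝ)
    (x : EuclideanSpace ℝ (Fin n)) : EuclideanSpace ℝ (Fin n) :=
  WithLp.toLp 2 (fun i => ∑ j, A i j * x j)

namespace SphAux

variable {n : ℕ}

lemma inner_euc (z w : EuclideanSpace ℝ (Fin n)) : ⟪z, w⟫_ℝ = ∑ i, z i * w i := by
  simp [PiLp.inner_apply, RCLike.inner_apply, conj_trivial]
  exact Finset.sum_congr rfl fun i _ => mul_comm _ _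

lemma inner_mulVecE (A : Matrix (Fin n) (Fin n) ℝ) (z w : EuclideanSpace ℝ (Fin n)) :
    ⟪mulVecE A z, w⟫_ℝ = ∑ i, ∑ j, A i j * z j * w i := by
  rw [inner_euc]
  refine Finset.sum_congr rfl fun i _ => ?_
  show (∑ j, A i j * z j) * w i = _
  rw [Finset.sum_mul]

lemma inner_mulVecE_symm (A : Matrix (Fin n) (Fin n) ℝ) (hA : A.IsSymm)
    (z w : EuclideanSpace ℝ (Fin n)) :
    ⟪mulVecE A z, w⟫_ℝ = ⟪mulVecE A w, z⟫_ℝ := by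
  rw [inner_mulVecE, inner_mulVecE, Finset.sum_comm]
  refine Finset.sum_congr rfl fun i _ => Finset.sum_congr rfl fun j _ => ?_
  rw [hA.apply j i]
  ring

lemma inner_mulVecE_neg (hn : 2 ≤ n) (A : Matrix (Fin n) (Fin n) ℝ)
    (hneg : ∀ i j : Fin n, A i j < 0) (z w : EuclideanSpace ℝ (Fin n))
    (hz : ∀ i, 0 < z i) (hw : ∀ i, 0 < w i) :
    ⟪mulVecE A z, w⟫_ℝ < 0 := by
  rw [inner_mulVecE]
  have hne : (Finset.univ : Finset (Fin n)).Nonempty := ⟨⟨0, by omega⟩, Finset.mem_univ _⟩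
  refine Finset.sum_neg (fun i _ => Finset.sum_neg (fun j _ => ?_) hne) hne
  exact mul_neg_of_neg_of_pos (mul_neg_of_neg_of_pos (hneg i j) (hz j)) (hw i)

noncomputable def mulVecL (A : Matrix (Fin n) (Fin n) ℝ) :
    EuclideanSpace ℝ (Fin n) →ₗ[ℝ] EuclideanSpace ℝ (Fin n) where
  toFun := mulVecE A
  map_add' p q := by
    ext i
    show ∑ j, A i j * (p j + q j) = (∑ j, A i j * p j) + ∑ j, A i j * q j
    rw [← Finset.sum_add_distrib]
    exact Finset.sum_congr rfl fun j _ => by ring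
  map_smul' r p := by
    ext i
    show ∑ j, A i j * (r * p j) = r * ∑ j, A i j * p j
    rw [Finset.mul_sum]
    exact Finset.sum_congr rfl fun j _ => by ring

lemma mulVecE_add (A : Matrix (Fin n) (Fin n) ℝ) (p q : EuclideanSpace ℝ (Fin n)) :
    mulVecE A (p + q) = mulVecE A p + mulVecE A q :=
  (mulVecL A).map_add p q

lemma mulVecE_smul (A : Matrix (Fin n) (Fin n) ℝ) (r : ℝ) (p : EuclideanSpace ℝ (Fin n)) :
    mulVecE A (r • p) = r • mulVecE A p :=
  (mulVecL A).map_smul r p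

/-- The key spectral inequality: if `q_A(z) < 0` and `⟪Az, w⟫ = 0`
then `q_A(z) ≤ q_A(w)`. -/
lemma eigen_key (hn : 2 ≤ n) (A : Matrix (Fin n) (Fin n) ℝ)
    (v : Fin n → EuclideanSpace ℝ (Fin n)) (hv : Orthonormal ℝ v)
    (μ : Fin n → ℝ) (heig : ∀ i, mulVecE A (v i) = μ i • v i) (hmono : Monotone μ)
    (hpos : 0 < μ ⟨1, lt_of_lt_of_le one_lt_two hn⟩)
    (z w : EuclideanSpace ℝ (Fin n))
    (hqz : ⟪mulVecE A z, z⟫_ℝ < 0)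
    (hAzw : ⟪mulVecE A z, w⟫_ℝ = 0) :
    ⟪mulVecE A z, z⟫_ℝ ≤ ⟪mulVecE A w, w⟫_ℝ := by
  classical
  -- an orthonormal basis out of `v`
  haveI : Nonempty (Fin n) := ⟨⟨0, by omega⟩⟩
  have hcard : Fintype.card (Fin n) = Module.finrank ℝ (EuclideanSpace ℝ (Fin n)) := by
    simp
  let B : Module.Basis (Fin n) ℝ (EuclideanSpace ℝ (Fin n)) :=
    basisOfLinearIndependentOfCardEqFinrank hv.linearIndependent hcard
  have hB : ⇑B = v := coe_basisOfLinearIndependentOfCardEqFinrank _ _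
  let ob : OrthonormalBasis (Fin n) ℝ (EuclideanSpace ℝ (Fin n)) :=
    B.toOrthonormalBasis (by rwa [hB])
  have hob : ⇑ob = v := by
    rw [Module.Basis.coe_toOrthonormalBasis, hB]
  have hpars : ∀ p : EuclideanSpace ℝ (Fin n), (∑ i, ⟪v i, p⟫_ℝ • v i) = p := by
    intro p
    have h := ob.sum_repr' p
    simpa only [hob] using h
  have hlin : ∀ c : Fin n → ℝ,
      mulVecE A (∑ i, c i • v i) = ∑ i, (c i * μ i) • v i := by
    intro c
    have h1 : mulVecE A (∑ i, c i • v i) = (mulVecL A) (∑ i, c i • v i) := rfl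
    rw [h1, map_sum]
    refine Finset.sum_congr rfl fun i _ => ?_
    have h2 : (mulVecL A) (c i • v i) = c i • mulVecE A (v i) := (mulVecL A).map_smul _ _
    rw [h2, heig i, smul_smul]
  have hAexp : ∀ p q : EuclideanSpace ℝ (Fin n),
      ⟪mulVecE A p, q⟫_ℝ = ∑ i, μ i * (⟪v i, p⟫_ℝ * ⟪v i, q⟫_ℝ) := by
    intro p q
    conv_lhs => rw [← hpars p]
    rw [hlin, sum_inner]
    exact Finset.sum_congr rfl fun i _ => by rw [real_inner_smul_left]; ring
  set i0 : Fin n := ⟨0, by omega⟩ with hi0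
  have hi0mem : i0 ∈ (Finset.univ : Finset (Fin n)) := Finset.mem_univ _
  have hμpos : ∀ i ∈ Finset.univ.erase i0, 0 < μ i := by
    intro i hi
    have hne : i ≠ i0 := Finset.ne_of_mem_erase hi
    have h1le : (⟨1, by omega⟩ : Fin n) ≤ i := by
      rw [Fin.le_def]
      have hxx : i.val ≠ 0 := fun h => hne (Fin.ext h)
      show 1 ≤ i.val
      omega
    exact lt_of_lt_of_le hpos (hmono h1le)
  rw [hAexp z z] at hqz
  rw [hAexp z w] at hAzw
  rw [hAexp z z, hAexp w w]
  rw [← Finset.add_sum_erase _ (fun i => μ i * (⟪v i, z⟫_ℝ * ⟪v i, z⟫_ℝ)) hi0mem] at hqz ⊢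
  rw [← Finset.add_sum_erase _ (fun i => μ i * (⟪v i, z⟫_ℝ * ⟪v i, w⟫_ℝ)) hi0mem] at hAzw
  rw [← Finset.add_sum_erase _ (fun i => μ i * (⟪v i, w⟫_ℝ * ⟪v i, w⟫_ℝ)) hi0mem]
  set P := ∑ i ∈ Finset.univ.erase i0, μ i * (⟪v i, z⟫_ℝ * ⟪v i, z⟫_ℝ) with hP'
  set Q := ∑ i ∈ Finset.univ.erase i0, μ i * (⟪v i, w⟫_ℝ * ⟪v i, w⟫_ℝ) with hQ'
  set M := ∑ i ∈ Finset.univ.erase i0, μ i * (⟪v i, z⟫_ℝ * ⟪v i, w⟫_ℝ) with hM'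
  have hP : 0 ≤ P := Finset.sum_nonneg fun i hi =>
    mul_nonneg (hμpos i hi).le (mul_self_nonneg _)
  have hQ : 0 ≤ Q := Finset.sum_nonneg fun i hi =>
    mul_nonneg (hμpos i hi).le (mul_self_nonneg _)
  have hCS : M ^ 2 ≤ P * Q := by
    have h := Finset.sum_mul_sq_le_sq_mul_sq (Finset.univ.erase i0)
      (fun i => Real.sqrt (μ i) * ⟪v i, z⟫_ℝ) (fun i => Real.sqrt (μ i) * ⟪v i, w⟫_ℝ)
    have e1 : ∑ i ∈ Finset.univ.erase i0,
        (Real.sqrt (μ i) * ⟪v i, z⟫_ℝ) * (Real.sqrt (μ i) * ⟪v i, w⟫_ℝ) = M := by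
      refine Finset.sum_congr rfl fun i hi => ?_
      have : Real.sqrt (μ i) * Real.sqrt (μ i) = μ i := Real.mul_self_sqrt (hμpos i hi).le
      calc (Real.sqrt (μ i) * ⟪v i, z⟫_ℝ) * (Real.sqrt (μ i) * ⟪v i, w⟫_ℝ)
          = (Real.sqrt (μ i) * Real.sqrt (μ i)) * (⟪v i, z⟫_ℝ * ⟪v i, w⟫_ℝ) := by ring
        _ = μ i * (⟪v i, z⟫_ℝ * ⟪v i, w⟫_ℝ) := by rw [this]
    have e2 : ∑ i ∈ Finset.univ.erase i0, (Real.sqrt (μ i) * ⟪v i, z⟫_ℝ) ^ 2 = P := by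
      refine Finset.sum_congr rfl fun i hi => ?_
      have : Real.sqrt (μ i) * Real.sqrt (μ i) = μ i := Real.mul_self_sqrt (hμpos i hi).le
      calc (Real.sqrt (μ i) * ⟪v i, z⟫_ℝ) ^ 2
          = (Real.sqrt (μ i) * Real.sqrt (μ i)) * (⟪v i, z⟫_ℝ * ⟪v i, z⟫_ℝ) := by ring
        _ = μ i * (⟪v i, z⟫_ℝ * ⟪v i, z⟫_ℝ) := by rw [this]
    have e3 : ∑ i ∈ Finset.univ.erase i0, (Real.sqrt (μ i) * ⟪v i, w⟫_ℝ) ^ 2 = Q := by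
      refine Finset.sum_congr rfl fun i hi => ?_
      have : Real.sqrt (μ i) * Real.sqrt (μ i) = μ i := Real.mul_self_sqrt (hμpos i hi).le
      calc (Real.sqrt (μ i) * ⟪v i, w⟫_ℝ) ^ 2
          = (Real.sqrt (μ i) * Real.sqrt (μ i)) * (⟪v i, w⟫_ℝ * ⟪v i, w⟫_ℝ) := by ring
        _ = μ i * (⟪v i, w⟫_ℝ * ⟪v i, w⟫_ℝ) := by rw [this]
    rw [e1, e2, e3] at h
    exact h
  by_contra hcon
  push_neg at hcon
  have h1 : 0 < -(μ i0 * (⟪v i0, z⟫_ℝ * ⟪v i0, z⟫_ℝ)) - P := by linarith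
  have h2 : 0 < -(μ i0 * (⟪v i0, w⟫_ℝ * ⟪v i0, w⟫_ℝ)) - Q := by linarith
  have hM : M = -(μ i0 * (⟪v i0, z⟫_ℝ * ⟪v i0, w⟫_ℝ)) := by linarith
  have hM2 : M ^ 2 = (μ i0 * (⟪v i0, z⟫_ℝ * ⟪v i0, z⟫_ℝ)) *
      (μ i0 * (⟪v i0, w⟫_ℝ * ⟪v i0, w⟫_ℝ)) := by
    rw [hM]; ring
  nlinarith [mul_pos h1 h2, mul_nonneg hP hQ, mul_nonneg hP h2.le, mul_nonneg h1.le hQ]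

end SphAux

open SphAux in
/-- Let `A` be a symmetric `n × n` matrix (`n ≥ 2`) with an orthonormal basis of eigenvectors
and corresponding eigenvalues `μ₀ < μ₁ ≤ … ≤ μₙ₋₁`, such that `-A` is a positive matrix
(all entries of `A` are negative) and `0 < μ₁`.  Then the quadratic function
`q_A(x) = ⟪Ax, x⟫` is spherically quasi-convex on `C = 𝕊^{n-1} ∩ ℝⁿ₊₊`. -/
theorem negative_matrix_quadratic_sph_quasiconvex {n : ℕ} (hn : 2 ≤ n)
    (A : Matrix (Fin n) (Fin n) ℝ) (hA : A.IsSymm)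
    (v : Fin n → EuclideanSpace ℝ (Fin n)) (hv : Orthonormal ℝ v)
    (μ : Fin n → ℝ) (heig : ∀ i, mulVecE A (v i) = μ i • v i) (hmono : Monotone μ)
    (h01 : μ ⟨0, by omega⟩ < μ ⟨1, by omega⟩)
    (hneg : ∀ i j : Fin n, A i j < 0)
    (hpos : 0 < μ ⟨1, by omega⟩) :
    SphQuasiConvexOn (Metric.sphere 0 1 ∩ {x | ∀ i, 0 < x i})
      (fun x => ⟪mulVecE A x, x⟫_ℝ) := by
  intro x hx y hy γ hgeo hC t₁ t t₂ ht10 ht1t htt2 ht21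
  obtain ⟨hx1, hy1, hcase⟩ := hgeo
  have hxpos : ∀ i, 0 < x i := hx.2
  have hypos : ∀ i, 0 < y i := hy.2
  have hyne : y ≠ -x := by
    intro h
    have h1 := hypos ⟨0, by omega⟩
    rw [h] at h1
    have h2 := hxpos ⟨0, by omega⟩
    have h3 : (-x) (⟨0, by omega⟩ : Fin n) = -(x ⟨0, by omega⟩) := rfl
    rw [h3] at h1
    linarith
  have hγeq : γ = geoSeg x y := by
    rcases hcase with ⟨-, h⟩ | ⟨h, -⟩
    · exact h
    · exact absurd h hyne
  have hxx : ⟪x, x⟫_ℝ = 1 := by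
    rw [real_inner_self_eq_norm_mul_norm, mem_sphere_zero_iff_norm.mp hx.1]
    norm_num
  have hyy : ⟪y, y⟫_ℝ = 1 := by
    rw [real_inner_self_eq_norm_mul_norm, mem_sphere_zero_iff_norm.mp hy.1]
    norm_num
  by_cases hxy : y = x
  · subst hxy
    have hconst : ∀ s : ℝ, geoSeg y y s = y := by
      intro s
      unfold geoSeg
      rw [hyy]
      norm_num [Real.arccos_one]
    rw [hγeq]
    simp only [hconst]
    exact le_max_left _ _
  set c : ℝ := ⟪x, y⟫_ℝ with hc
  have hc0 : 0 < c := by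
    rw [hc, inner_euc]
    exact Finset.sum_pos (fun i _ => mul_pos (hxpos i) (hypos i))
      ⟨⟨0, by omega⟩, Finset.mem_univ _⟩
  have hc1 : c < 1 := by
    have hne : x - y ≠ 0 := sub_ne_zero.mpr (fun h => hxy h.symm)
    have hposn : 0 < ‖x - y‖ := norm_pos_iff.mpr hne
    have hsqn : ‖x - y‖ ^ 2 = 2 - 2 * c := by
      rw [norm_sub_sq_real, mem_sphere_zero_iff_norm.mp hx.1,
        mem_sphere_zero_iff_norm.mp hy.1, ← hc]
      ring
    nlinarith
  set d : ℝ := Real.arccos c with hd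
  have hd0 : 0 < d := Real.arccos_pos.mpr hc1
  have hdlt : d < Real.pi / 2 := Real.arccos_lt_pi_div_two.mpr hc0
  have hs2 : 0 < 1 - c ^ 2 := by nlinarith
  have hsqp : 0 < Real.sqrt (1 - c ^ 2) := Real.sqrt_pos.mpr hs2
  set u : EuclideanSpace ℝ (Fin n) := (Real.sqrt (1 - c ^ 2))⁻¹ • (y - c • x) with hu
  have hparam : ∀ s : ℝ, geoSeg x y s = Real.cos (s * d) • x + Real.sin (s * d) • u := by
    intro s
    unfold geoSeg
    rw [← hc, ← hd, hu]
    rw [div_eq_mul_inv, div_eq_mul_inv]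
    module
  have hbil : ∀ α β α' β' : ℝ,
      ⟪mulVecE A (α • x + β • u), α' • x + β' • u⟫_ℝ =
        (α * α') * ⟪mulVecE A x, x⟫_ℝ + (α * β' + β * α') * ⟪mulVecE A x, u⟫_ℝ +
          (β * β') * ⟪mulVecE A u, u⟫_ℝ := by
    intro α β α' β'
    rw [mulVecE_add, mulVecE_smul, mulVecE_smul]
    simp only [inner_add_left, inner_add_right, real_inner_smul_left, real_inner_smul_right]
    rw [inner_mulVecE_symm A hA u x]
    ring
  set qa := ⟪mulVecE A x, x⟫_ℝ with hqa
  set qb := ⟪mulVecE A x, u⟫_ℝ with hqb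
  set qc := ⟪mulVecE A u, u⟫_ℝ with hqc
  have hB1 : ∀ θ : ℝ,
      ⟪mulVecE A (Real.cos θ • x + Real.sin θ • u), Real.cos θ • x + Real.sin θ • u⟫_ℝ =
        qa * Real.cos θ ^ 2 + 2 * qb * Real.sin θ * Real.cos θ + qc * Real.sin θ ^ 2 := by
    intro θ
    rw [hbil]
    ring
  have hB2 : ∀ θ : ℝ,
      ⟪mulVecE A (Real.cos θ • x + Real.sin θ • u), (-Real.sin θ) • x + Real.cos θ • u⟫_ℝ =
        qb * Real.cos (2 * θ) - (qa - qc) / 2 * Real.sin (2 * θ) := by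
    intro θ
    rw [hbil, Real.cos_two_mul, Real.sin_two_mul]
    linear_combination (-qb) * Real.sin_sq_add_cos_sq θ
  have hB3 : ∀ θ : ℝ,
      ⟪mulVecE A ((-Real.sin θ) • x + Real.cos θ • u), (-Real.sin θ) • x + Real.cos θ • u⟫_ℝ =
        ⟪mulVecE A (Real.cos θ • x + Real.sin θ • u), Real.cos θ • x + Real.sin θ • u⟫_ℝ +
          (-(qa - qc) * Real.cos (2 * θ) - 2 * qb * Real.sin (2 * θ)) := by
    intro θ
    rw [hbil, hbil, Real.cos_two_mul, Real.sin_two_mul]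
    linear_combination (qa - qc) * Real.sin_sq_add_cos_sq θ
  have hCzz : ∀ θ : ℝ, 0 ≤ θ → θ ≤ d →
      (Real.cos θ • x + Real.sin θ • u) ∈
        (Metric.sphere (0 : EuclideanSpace ℝ (Fin n)) 1 ∩ {p | ∀ i, 0 < p i}) := by
    intro θ h0 h1
    have ht : θ / d ∈ Set.Icc (0:ℝ) 1 := ⟨div_nonneg h0 hd0.le, (div_le_one hd0).mpr h1⟩
    have hmem := hC (θ / d) ht
    rw [hγeq, hparam (θ / d), div_mul_cancel₀ _ (ne_of_gt hd0)] at hmem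
    exact hmem
  have hkey : ∀ σ σ' : ℝ, 0 ≤ σ → σ ≤ σ' → σ' ≤ d →
      0 ≤ qb * Real.cos (2 * σ) - (qa - qc) / 2 * Real.sin (2 * σ) →
      0 ≤ qb * Real.cos (2 * σ') - (qa - qc) / 2 * Real.sin (2 * σ') := by
    intro σ σ' hσ0 hσσ' hσ'd hGσ
    by_contra hcon
    push_neg at hcon
    have hcont : ContinuousOn
        (fun θ : ℝ => qb * Real.cos (2 * θ) - (qa - qc) / 2 * Real.sin (2 * θ))
        (Set.Icc σ σ') := by fun_prop
    have h0mem : (0:ℝ) ∈ Set.Icc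
        (qb * Real.cos (2 * σ') - (qa - qc) / 2 * Real.sin (2 * σ'))
        (qb * Real.cos (2 * σ) - (qa - qc) / 2 * Real.sin (2 * σ)) := ⟨hcon.le, hGσ⟩
    obtain ⟨θs, hmem, hroot⟩ := intermediate_value_Icc' hσσ' hcont h0mem
    have hroot' : qb * Real.cos (2 * θs) - (qa - qc) / 2 * Real.sin (2 * θs) = 0 := hroot
    have hθs0 : 0 ≤ θs := le_trans hσ0 hmem.1
    have hθsd : θs ≤ d := le_trans hmem.2 hσ'd
    have hzC := hCzz θs hθs0 hθsd
    have hzpos : ∀ i, 0 < (Real.cos θs • x + Real.sin θs • u) i := hzC.2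
    have hqz : ⟪mulVecE A (Real.cos θs • x + Real.sin θs • u),
        Real.cos θs • x + Real.sin θs • u⟫_ℝ < 0 :=
      inner_mulVecE_neg hn A hneg _ _ hzpos hzpos
    have hAzw : ⟪mulVecE A (Real.cos θs • x + Real.sin θs • u),
        (-Real.sin θs) • x + Real.cos θs • u⟫_ℝ = 0 := by
      rw [hB2 θs]
      exact hroot'
    have hle := eigen_key hn A v hv μ heig hmono hpos _ _ hqz hAzw
    have hΔ0 : 0 ≤ -(qa - qc) * Real.cos (2 * θs) - 2 * qb * Real.sin (2 * θs) := by
      have h3 := hB3 θs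
      rw [h3] at hle
      linarith
    have hexp : qb * Real.cos (2 * σ') - (qa - qc) / 2 * Real.sin (2 * σ') =
        (qb * Real.cos (2 * θs) - (qa - qc) / 2 * Real.sin (2 * θs)) * Real.cos (2 * (σ' - θs)) +
          (-(qa - qc) * Real.cos (2 * θs) - 2 * qb * Real.sin (2 * θs)) / 2 *
            Real.sin (2 * (σ' - θs)) := by
      rw [show (2:ℝ) * σ' = 2 * θs + 2 * (σ' - θs) by ring, Real.cos_add, Real.sin_add]
      ring
    have hsin : 0 ≤ Real.sin (2 * (σ' - θs)) := by
      apply Real.sin_nonneg_of_nonneg_of_le_pi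
      · have := hmem.2
        linarith
      · have hπ : 0 < Real.pi := Real.pi_pos
        linarith
    rw [hroot', zero_mul, zero_add] at hexp
    have hnn : 0 ≤ (-(qa - qc) * Real.cos (2 * θs) - 2 * qb * Real.sin (2 * θs)) / 2 *
        Real.sin (2 * (σ' - θs)) := mul_nonneg (by linarith) hsin
    linarith
  have htd1 : t₁ * d ≤ t * d := mul_le_mul_of_nonneg_right ht1t hd0.le
  have htd2 : t * d ≤ t₂ * d := mul_le_mul_of_nonneg_right htt2 hd0.le
  have htd0 : 0 ≤ t₁ * d := mul_nonneg ht10 hd0.le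
  have htd0' : 0 ≤ t * d := le_trans htd0 htd1
  have htdd : t₂ * d ≤ d := by
    have h := mul_le_mul_of_nonneg_right ht21 hd0.le
    rwa [one_mul] at h
  have htdd' : t * d ≤ d := le_trans htd2 htdd
  rw [hγeq]
  simp only [hparam]
  rw [hB1 (t * d), hB1 (t₁ * d), hB1 (t₂ * d)]
  have hπ : 0 < Real.pi := Real.pi_pos
  rcases le_or_gt 0 (qb * Real.cos (2 * (t * d)) - (qa - qc) / 2 * Real.sin (2 * (t * d)))
    with hGt | hGt
  · have hG2 := hkey (t * d) (t₂ * d) htd0' htd2 htdd hGt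
    have hT1 : (qa * Real.cos (t₂ * d) ^ 2 + 2 * qb * Real.sin (t₂ * d) * Real.cos (t₂ * d) +
          qc * Real.sin (t₂ * d) ^ 2) -
        (qa * Real.cos (t * d) ^ 2 + 2 * qb * Real.sin (t * d) * Real.cos (t * d) +
          qc * Real.sin (t * d) ^ 2) =
        Real.sin (t₂ * d - t * d) *
          (2 * qb * Real.cos (t * d + t₂ * d) - (qa - qc) * Real.sin (t * d + t₂ * d)) := by
      rw [Real.sin_sub, Real.sin_add, Real.cos_add]
      linear_combination (qc + (qa - qc) * Real.cos (t * d) ^ 2 +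
            2 * qb * Real.sin (t * d) * Real.cos (t * d)) *
          Real.sin_sq_add_cos_sq (t₂ * d) -
        (qc + (qa - qc) * Real.cos (t₂ * d) ^ 2 +
            2 * qb * Real.sin (t₂ * d) * Real.cos (t₂ * d)) * Real.sin_sq_add_cos_sq (t * d)
    have hT2 : Real.cos (t₂ * d - t * d) *
          (2 * qb * Real.cos (t * d + t₂ * d) - (qa - qc) * Real.sin (t * d + t₂ * d)) =
        (qb * Real.cos (2 * (t * d)) - (qa - qc) / 2 * Real.sin (2 * (t * d))) +
          (qb * Real.cos (2 * (t₂ * d)) - (qa - qc) / 2 * Real.sin (2 * (t₂ * d))) := by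
      simp only [Real.cos_sub, Real.cos_add, Real.sin_add, Real.cos_two_mul, Real.sin_two_mul]
      linear_combination (-2 * qb * Real.sin (t * d) ^ 2 -
            (qa - qc) * Real.sin (t * d) * Real.cos (t * d) +
            2 * qb * (Real.sin (t * d) ^ 2 + Real.cos (t * d) ^ 2 - 1)) *
          Real.sin_sq_add_cos_sq (t₂ * d) +
        (-2 * qb * Real.sin (t₂ * d) ^ 2 -
            (qa - qc) * Real.sin (t₂ * d) * Real.cos (t₂ * d)) *
          Real.sin_sq_add_cos_sq (t * d)
    have hcosp : 0 < Real.cos (t₂ * d - t * d) := by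
      apply Real.cos_pos_of_mem_Ioo
      constructor
      · linarith
      · linarith
    have hΦ : 0 ≤ 2 * qb * Real.cos (t * d + t₂ * d) -
        (qa - qc) * Real.sin (t * d + t₂ * d) := by
      by_contra hΦn
      push_neg at hΦn
      have := mul_neg_of_pos_of_neg hcosp hΦn
      rw [hT2] at this
      linarith
    have hsinp : 0 ≤ Real.sin (t₂ * d - t * d) :=
      Real.sin_nonneg_of_nonneg_of_le_pi (by linarith) (by linarith)
    have hfin := mul_nonneg hsinp hΦ
    rw [← hT1] at hfin
    exact le_trans (by linarith) (le_max_right _ _)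
  · have hG1 : qb * Real.cos (2 * (t₁ * d)) - (qa - qc) / 2 * Real.sin (2 * (t₁ * d)) < 0 := by
      by_contra hcon
      push_neg at hcon
      have := hkey (t₁ * d) (t * d) htd0 htd1 htdd' hcon
      linarith
    have hT1 : (qa * Real.cos (t * d) ^ 2 + 2 * qb * Real.sin (t * d) * Real.cos (t * d) +
          qc * Real.sin (t * d) ^ 2) -
        (qa * Real.cos (t₁ * d) ^ 2 + 2 * qb * Real.sin (t₁ * d) * Real.cos (t₁ * d) +
          qc * Real.sin (t₁ * d) ^ 2) =
        Real.sin (t * d - t₁ * d) *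
          (2 * qb * Real.cos (t₁ * d + t * d) - (qa - qc) * Real.sin (t₁ * d + t * d)) := by
      rw [Real.sin_sub, Real.sin_add, Real.cos_add]
      linear_combination (qc + (qa - qc) * Real.cos (t₁ * d) ^ 2 +
            2 * qb * Real.sin (t₁ * d) * Real.cos (t₁ * d)) *
          Real.sin_sq_add_cos_sq (t * d) -
        (qc + (qa - qc) * Real.cos (t * d) ^ 2 +
            2 * qb * Real.sin (t * d) * Real.cos (t * d)) * Real.sin_sq_add_cos_sq (t₁ * d)
    have hT2 : Real.cos (t * d - t₁ * d) *
          (2 * qb * Real.cos (t₁ * d + t * d) - (qa - qc) * Real.sin (t₁ * d + t * d)) =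
        (qb * Real.cos (2 * (t₁ * d)) - (qa - qc) / 2 * Real.sin (2 * (t₁ * d))) +
          (qb * Real.cos (2 * (t * d)) - (qa - qc) / 2 * Real.sin (2 * (t * d))) := by
      simp only [Real.cos_sub, Real.cos_add, Real.sin_add, Real.cos_two_mul, Real.sin_two_mul]
      linear_combination (-2 * qb * Real.sin (t₁ * d) ^ 2 -
            (qa - qc) * Real.sin (t₁ * d) * Real.cos (t₁ * d) +
            2 * qb * (Real.sin (t₁ * d) ^ 2 + Real.cos (t₁ * d) ^ 2 - 1)) *
          Real.sin_sq_add_cos_sq (t * d) +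
        (-2 * qb * Real.sin (t * d) ^ 2 -
            (qa - qc) * Real.sin (t * d) * Real.cos (t * d)) *
          Real.sin_sq_add_cos_sq (t₁ * d)
    have hcosp : 0 < Real.cos (t * d - t₁ * d) := by
      apply Real.cos_pos_of_mem_Ioo
      constructor
      · linarith
      · linarith
    have hΦ : 2 * qb * Real.cos (t₁ * d + t * d) -
        (qa - qc) * Real.sin (t₁ * d + t * d) ≤ 0 := by
      by_contra hΦn
      push_neg at hΦn
      have := mul_pos hcosp hΦn
      rw [hT2] at this
      linarith
    have hsinp : 0 ≤ Real.sin (t * d - t₁ * d) :=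
      Real.sin_nonneg_of_nonneg_of_le_pi (by linarith) (by linarith)
    have hfin := mul_nonpos_of_nonneg_of_nonpos hsinp hΦ
    rw [← hT1] at hfin
    exact le_trans (by linarith) (le_max_left _ _)
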